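/- Let R be a commutative ring. If 4×4 by 4×4 matrix multiplication over R admits a bilinear algorithm with a multiplications, 4×4 by 4×3 matrix multiplication over R admits a bilinear algorithm with b multiplications, and 3×3 by 3×4 matrix multiplication over R admits a bilinear algorithm with c multiplications, then 7×7 by 7×7 matrix multiplication over R admits a bilinear algorithm with a + 3b + 3c multiplications; i.e., ⟨7,7,7⟩ ≤ ⟨4,4,4⟩ + 3⟨4,4,3⟩ + 3⟨3,3,4⟩. -/

import Mathlib

/-!
Split `7 = 4 + 3` (more generally `p + q` with `q ≤ p`) and let `J` be a `4 × 3` matrix with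
`Jᵀ * J = 1`, used to pad `3`-blocks to `4`-blocks. The product of two `2 × 2` block matrices is
then a sum of seven products of linear expressions in the blocks: one `4 × 4` by `4 × 4` product,
and two families of three products whose shapes are the cyclic rotations of `⟨4,4,3⟩` and of
`⟨3,3,4⟩`. A bilinear algorithm for `⟨u,v,w⟩` yields one for `⟨v,w,u⟩` with the same number of
multiplications, because both describe a decomposition of the trilinear form `tr (A * B * C)`.
-/

/-- A bilinear (non-commutative) algorithm computing `u×v` by `v×w` matrix
multiplication over `R` with `r` multiplications: there are `R`-linear
functionals `f i` on `u×v` matrices, `R`-linear functionals `g i` on `v×w`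
matrices, and `u×w` matrices `C i` such that `A * B = ∑ i, f i A * g i B • C i`
for all `A`, `B`. -/
def BilinearAlgorithm (R : Type*) [CommRing R] (u v w r : ℕ) : Prop :=
  ∃ (f : Fin r → (Matrix (Fin u) (Fin v) R →ₗ[R] R))
    (g : Fin r → (Matrix (Fin v) (Fin w) R →ₗ[R] R))
    (C : Fin r → Matrix (Fin u) (Fin w) R),
    ∀ (A : Matrix (Fin u) (Fin v) R) (B : Matrix (Fin v) (Fin w) R),
      A * B = ∑ i, (f i A * g i B) • C i

open Matrix

/-- `BilinearAlgorithm R u v w r` unfolds to `HasBilinearAlgorithm R (· * ·) r` on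
`Fin`-indexed matrices. -/
def HasBilinearAlgorithm (R : Type*) [CommSemiring R] {M N P : Type*}
    [AddCommMonoid M] [Module R M] [AddCommMonoid N] [Module R N] [AddCommMonoid P] [Module R P]
    (φ : M → N → P) (r : ℕ) : Prop :=
  ∃ (f : Fin r → M →ₗ[R] R) (g : Fin r → N →ₗ[R] R) (C : Fin r → P),
    ∀ x y, φ x y = ∑ i, (f i x * g i y) • C i

namespace HasBilinearAlgorithm

section Module

variable {R M N P M' N' P' : Type*} [CommSemiring R]
  [AddCommMonoid M] [Module R M] [AddCommMonoid N] [Module R N] [AddCommMonoid P] [Module R P]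
  [AddCommMonoid M'] [Module R M'] [AddCommMonoid N'] [Module R N'] [AddCommMonoid P']
  [Module R P'] {φ ψ : M → N → P} {r s : ℕ}

theorem add (hφ : HasBilinearAlgorithm R φ r) (hψ : HasBilinearAlgorithm R ψ s) :
    HasBilinearAlgorithm R (fun x y => φ x y + ψ x y) (r + s) := by
  obtain ⟨f, g, C, hφ⟩ := hφ
  obtain ⟨f', g', C', hψ⟩ := hψ
  refine ⟨Fin.append f f', Fin.append g g', Fin.append C C', fun x y => ?_⟩
  simp only [Fin.sum_univ_add, Fin.append_left, Fin.append_right, hφ, hψ]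

theorem comp (h : HasBilinearAlgorithm R φ r) (F : M' →ₗ[R] M) (G : N' →ₗ[R] N)
    (H : P →ₗ[R] P') : HasBilinearAlgorithm R (fun x y => H (φ (F x) (G y))) r := by
  obtain ⟨f, g, C, h⟩ := h
  refine ⟨fun i => f i ∘ₗ F, fun i => g i ∘ₗ G, fun i => H (C i), fun x y => ?_⟩
  simp only [h, map_sum, map_smul, LinearMap.comp_apply]

end Module

section Matrix

variable {R l m n l' m' n' : Type*} [CommSemiring R] [Fintype m] {r : ℕ}

theorem matrix_mul_reindex [Fintype m']
    (h : HasBilinearAlgorithm R (· * · : Matrix l m R → Matrix m n R → Matrix l n R) r)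
    (el : l ≃ l') (em : m ≃ m') (en : n ≃ n') :
    HasBilinearAlgorithm R (· * · : Matrix l' m' R → Matrix m' n' R → Matrix l' n' R) r := by
  convert h.comp (reindexLinearEquiv R R el.symm em.symm).toLinearMap
    (reindexLinearEquiv R R em.symm en.symm).toLinearMap (reindexLinearEquiv R R el en).toLinearMap
  simp

theorem matrix_mul_rotate [Fintype l] [Fintype n] [DecidableEq l] [DecidableEq m]
    (h : HasBilinearAlgorithm R (· * · : Matrix l m R → Matrix m n R → Matrix l n R) r) :
    HasBilinearAlgorithm R (· * · : Matrix m n R → Matrix n l R → Matrix m l R) r := by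
  obtain ⟨f, g, C, h⟩ := h
  refine ⟨g, fun i => traceLinearMap l R R ∘ₗ mulLeftLinearMap l R (C i),
    fun i => of fun j k => f i (single k j 1), fun X Y => ?_⟩
  ext j k
  beta_reduce at h ⊢
  -- `(X * Y) j k = tr (single k j 1 * X * Y)`, and `single k j 1 * X` is expanded by `h`.
  rw [← one_smul R ((X * Y) j k), ← trace_single_mul, ← Matrix.mul_assoc, h, Matrix.sum_mul,
    trace_sum, Matrix.sum_apply]
  refine Finset.sum_congr rfl fun i _ => ?_
  simp only [smul_mul, trace_smul, Matrix.smul_apply, of_apply, LinearMap.comp_apply,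
    mulLeftLinearMap_apply, traceLinearMap_apply, smul_eq_mul]
  ring

end Matrix

end HasBilinearAlgorithm

namespace Matrix

section BlockLinearMaps

variable {R M l m n o : Type*} [CommSemiring R] [AddCommMonoid M] [Module R M]

@[simps]
def toBlocks₁₁ₗ : Matrix (n ⊕ o) (l ⊕ m) R →ₗ[R] Matrix n l R where
  toFun := toBlocks₁₁
  map_add' _ _ := rfl
  map_smul' _ _ := rfl

@[simps]
def toBlocks₁₂ₗ : Matrix (n ⊕ o) (l ⊕ m) R →ₗ[R] Matrix n m R where
  toFun := toBlocks₁₂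
  map_add' _ _ := rfl
  map_smul' _ _ := rfl

@[simps]
def toBlocks₂₁ₗ : Matrix (n ⊕ o) (l ⊕ m) R →ₗ[R] Matrix o l R where
  toFun := toBlocks₂₁
  map_add' _ _ := rfl
  map_smul' _ _ := rfl

@[simps]
def toBlocks₂₂ₗ : Matrix (n ⊕ o) (l ⊕ m) R →ₗ[R] Matrix o m R where
  toFun := toBlocks₂₂
  map_add' _ _ := rfl
  map_smul' _ _ := rfl

@[simps]
def fromBlocksₗ (f₁₁ : M →ₗ[R] Matrix n l R) (f₁₂ : M →ₗ[R] Matrix n m R)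
    (f₂₁ : M →ₗ[R] Matrix o l R) (f₂₂ : M →ₗ[R] Matrix o m R) :
    M →ₗ[R] Matrix (n ⊕ o) (l ⊕ m) R where
  toFun x := fromBlocks (f₁₁ x) (f₁₂ x) (f₂₁ x) (f₂₂ x)
  map_add' x y := by simp only [map_add, fromBlocks_add]
  map_smul' c x := by simp only [map_smul, fromBlocks_smul, RingHom.id_apply]

end BlockLinearMaps

theorem mul_mul_cancel_left_of_mul_eq_one {R l m o : Type*} [Semiring R] [Fintype l]
    [Fintype m] [DecidableEq m] {A : Matrix m l R} {B : Matrix l m R} (h : A * B = 1)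
    (X : Matrix m o R) : A * (B * X) = X := by
  rw [← Matrix.mul_assoc, h, Matrix.one_mul]

end Matrix

namespace BlockScheme

variable {R m n : Type*} [CommRing R] [Fintype m] [Fintype n] (J : Matrix m n R)

local notation "Mat" => Matrix (m ⊕ n) (m ⊕ n) R

def form₁ : Mat →ₗ[R] Matrix m m R :=
  toBlocks₁₁ₗ + mulLeftLinearMap m R J ∘ₗ mulRightLinearMap n R Jᵀ ∘ₗ toBlocks₂₂ₗ

def form₂ : Mat →ₗ[R] Matrix n m R :=
  toBlocks₂₁ₗ + mulRightLinearMap n R Jᵀ ∘ₗ toBlocks₂₂ₗ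

def form₃ : Mat →ₗ[R] Matrix m m R :=
  toBlocks₁₁ₗ

def form₄ : Mat →ₗ[R] Matrix m n R :=
  toBlocks₁₂ₗ - mulLeftLinearMap n R J ∘ₗ toBlocks₂₂ₗ

def form₅ : Mat →ₗ[R] Matrix n n R :=
  toBlocks₂₂ₗ

def form₆ : Mat →ₗ[R] Matrix m n R :=
  mulRightLinearMap m R J ∘ₗ toBlocks₁₁ₗ + toBlocks₁₂ₗ

def form₇ : Mat →ₗ[R] Matrix n m R :=
  toBlocks₂₁ₗ - mulLeftLinearMap m R Jᵀ ∘ₗ toBlocks₁₁ₗ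

def place₁ : Matrix m m R →ₗ[R] Mat :=
  fromBlocksₗ LinearMap.id 0 0 (mulLeftLinearMap n R Jᵀ ∘ₗ mulRightLinearMap m R J)

def place₂ : Matrix n m R →ₗ[R] Mat :=
  fromBlocksₗ 0 0 LinearMap.id (-mulRightLinearMap n R J)

def place₃ : Matrix m n R →ₗ[R] Mat :=
  fromBlocksₗ 0 LinearMap.id 0 (mulLeftLinearMap n R Jᵀ)

def place₄ : Matrix m m R →ₗ[R] Mat :=
  fromBlocksₗ LinearMap.id 0 0 0

def place₅ : Matrix n m R →ₗ[R] Mat :=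
  fromBlocksₗ (mulLeftLinearMap m R J) 0 LinearMap.id 0

def place₆ : Matrix m n R →ₗ[R] Mat :=
  fromBlocksₗ (-mulRightLinearMap m R Jᵀ) LinearMap.id 0 0

def place₇ : Matrix n n R →ₗ[R] Mat :=
  fromBlocksₗ 0 0 0 LinearMap.id

theorem mul_eq_sum [DecidableEq n] (hJ : Jᵀ * J = 1) (A B : Mat) :
    A * B = place₁ J (form₁ J A * form₁ J B) + place₂ J (form₂ J A * form₃ B) +
      place₃ J (form₃ A * form₄ J B) + place₄ (form₄ J A * form₂ J B) +
      place₅ J (form₅ A * form₇ J B) + place₆ J (form₆ J A * form₅ B) +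
      place₇ (form₇ J A * form₆ J B) := by
  rw [← fromBlocks_toBlocks A, ← fromBlocks_toBlocks B]
  simp only [form₁, form₂, form₃, form₄, form₅, form₆, form₇, place₁, place₂, place₃, place₄,
    place₅, place₆, place₇, LinearMap.add_apply, LinearMap.sub_apply, LinearMap.neg_apply,
    LinearMap.comp_apply, LinearMap.id_apply, LinearMap.zero_apply, fromBlocksₗ_apply,
    toBlocks₁₁ₗ_apply, toBlocks₁₂ₗ_apply, toBlocks₂₁ₗ_apply, toBlocks₂₂ₗ_apply,
    mulLeftLinearMap_apply, mulRightLinearMap_apply, toBlocks_fromBlocks₁₁, toBlocks_fromBlocks₁₂,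
    toBlocks_fromBlocks₂₁, toBlocks_fromBlocks₂₂, fromBlocks_multiply, fromBlocks_add,
    fromBlocks_inj]
  refine ⟨?_, ?_, ?_, ?_⟩ <;>
  · simp only [Matrix.mul_add, Matrix.add_mul, Matrix.mul_sub, Matrix.sub_mul, Matrix.mul_assoc,
      mul_mul_cancel_left_of_mul_eq_one hJ, hJ, Matrix.mul_one]
    abel

end BlockScheme

open BlockScheme in
theorem HasBilinearAlgorithm.matrix_mul_sum {R m n : Type*} [CommRing R] [Fintype m] [Fintype n]
    [DecidableEq m] [DecidableEq n] (J : Matrix m n R) (hJ : Jᵀ * J = 1) {a b c : ℕ}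
    (ha : HasBilinearAlgorithm R (· * · : Matrix m m R → Matrix m m R → Matrix m m R) a)
    (hb : HasBilinearAlgorithm R (· * · : Matrix m m R → Matrix m n R → Matrix m n R) b)
    (hc : HasBilinearAlgorithm R (· * · : Matrix n n R → Matrix n m R → Matrix n m R) c) :
    HasBilinearAlgorithm R
      (· * · : Matrix (m ⊕ n) (m ⊕ n) R → Matrix (m ⊕ n) (m ⊕ n) R → Matrix (m ⊕ n) (m ⊕ n) R)
      (a + 3 * b + 3 * c) := by
  rw [show a + 3 * b + 3 * c = a + b + b + b + c + c + c by ring]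
  convert ((((((ha.comp (form₁ J) (form₁ J) (place₁ J)).add
    (hb.matrix_mul_rotate.matrix_mul_rotate.comp (form₂ J) form₃ (place₂ J))).add
    (hb.comp form₃ (form₄ J) (place₃ J))).add
    (hb.matrix_mul_rotate.comp (form₄ J) (form₂ J) place₄)).add
    (hc.comp form₅ (form₇ J) (place₅ J))).add
    (hc.matrix_mul_rotate.matrix_mul_rotate.comp (form₆ J) form₅ (place₆ J))).add
    (hc.matrix_mul_rotate.comp (form₇ J) (form₆ J) place₇) using 1
  exact funext₂ (mul_eq_sum J hJ)

theorem bilinearAlgorithm_add_of_le {R : Type*} [CommRing R] {p q a b c : ℕ} (hqp : q ≤ p)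
    (ha : BilinearAlgorithm R p p p a) (hb : BilinearAlgorithm R p p q b)
    (hc : BilinearAlgorithm R q q p c) :
    BilinearAlgorithm R (p + q) (p + q) (p + q) (a + 3 * b + 3 * c) := by
  set J : Matrix (Fin p) (Fin q) R := (1 : Matrix (Fin p) (Fin p) R).submatrix id (Fin.castLE hqp)
  have hJ : Jᵀ * J = 1 := by
    rw [transpose_submatrix, transpose_one, ← submatrix_mul _ _ _ _ _ Function.bijective_id,
      Matrix.one_mul, submatrix_one _ (Fin.castLE_injective hqp)]
  exact (HasBilinearAlgorithm.matrix_mul_sum J hJ ha hb hc).matrix_mul_reindex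
    finSumFinEquiv finSumFinEquiv finSumFinEquiv

/-- ⟨7,7,7⟩ ≤ ⟨4,4,4⟩ + 3⟨4,4,3⟩ + 3⟨3,3,4⟩. -/
theorem bilinearAlgorithm_seven (R : Type*) [CommRing R] (a b c : ℕ)
    (ha : BilinearAlgorithm R 4 4 4 a)
    (hb : BilinearAlgorithm R 4 4 3 b)
    (hc : BilinearAlgorithm R 3 3 4 c) :
    BilinearAlgorithm R 7 7 7 (a + 3 * b + 3 * c) :=
  bilinearAlgorithm_add_of_le (by norm_num) ha hb hc
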